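/- arXiv:2106.05454 — 4 statements merged into one kernel-verified Lean document; each statement's English description precedes it below -/
import Mathlib

section
/- Define û₁ ∈ ℝ^q by √n·û₁ = 𝒞₁₁^{-1}W(1) − (η/√n)·𝒞₁₁^{-1}Σ₁₁β₁* − (λ/(2√n))·𝒞₁₁^{-1}sign(β₁*). If condition B holds, then for every j ∈ {1,…,p−q}: |(𝒞₂₁·√n·û₁ + (η/√n)·Σ₂₁β₁* − W(2))_j| ≤ λ/(2√n); equivalently, |(𝒞₂₁𝒞₁₁^{-1}(W(1) − (η/√n)Σ₁₁β₁* − (λ/(2√n))sign(β₁*)) + (η/√n)Σ₂₁β₁* − W(2))_j| ≤ λ/(2√n) for every such j. -/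
open Matrix

noncomputable def sgn (x : ℝ) : ℝ := if 0 < x then 1 else if x < 0 then -1 else 0

/-! Write `c = λ/(2√n)`, `A = 𝒞₂₁𝒞₁₁⁻¹W(1) − W(2)` and let `B` be the vector inside the second
absolute value of condition B. By the definition of û₁ the two vectors coincide, and since
`c · (2η/λ) = η/√n` they equal `A - c • B`. Condition B reads `|A_j| ≤ c - c |B_j|`, so the
triangle inequality gives `|A_j - c B_j| ≤ c`. -/

theorem abs_sub_mul_le_of_abs_le_sub_mul {α : Type*} [Ring α] [LinearOrder α] [IsOrderedRing α]
    {a b c : α} (hc : 0 ≤ c) (h : |a| ≤ c - c * |b|) : |a - c * b| ≤ c :=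
  calc |a - c * b| ≤ |a| + |c * b| := abs_sub _ _
    _ = |a| + c * |b| := by rw [abs_mul, abs_of_nonneg hc]
    _ ≤ c := le_sub_iff_add_le.mp h

theorem mulVec_sub_smul_sub_smul_add_smul_sub {m n R : Type*} [Fintype n] [CommRing R]
    (M : Matrix m n R) (w s u : n → R) (v w' : m → R) {a c t : R} (h : c * t = a) :
    M *ᵥ (w - a • u - c • s) + a • v - w' = (M *ᵥ w - w') - c • (M *ᵥ (s + t • u) - t • v) := by
  subst h
  simp only [mulVec_sub, mulVec_add, mulVec_smul, smul_sub, smul_add, mul_smul]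
  abel

/-- If condition B holds then |(𝒞₂₁·√n·û₁ + (η/√n)Σ₂₁β₁* − W(2))_j| ≤ λ/(2√n) for all j;
    equivalently |(𝒞₂₁𝒞₁₁⁻¹(W(1) − (η/√n)Σ₁₁β₁* − (λ/(2√n))sign(β₁*)) + (η/√n)Σ₂₁β₁* − W(2))_j|
    ≤ λ/(2√n). -/
theorem stmt5 (n p q : ℕ)
    (lam eta : ℝ) (hlam : 0 < lam)
    (Sig11 : Matrix (Fin q) (Fin q) ℝ)
    (Sig21 : Matrix (Fin (p - q)) (Fin q) ℝ)
    (beta1 : Fin q → ℝ)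
    (W1 : Fin q → ℝ)
    (W2 : Fin (p - q) → ℝ)
    (CC11 : Matrix (Fin q) (Fin q) ℝ)
    (CC21 : Matrix (Fin (p - q)) (Fin q) ℝ)
    -- definition of û₁
    (uhat1 : Fin q → ℝ)
    (huhat1 : Real.sqrt n • uhat1
      = CC11⁻¹.mulVec W1
        - (eta / Real.sqrt n) • CC11⁻¹.mulVec (Sig11.mulVec beta1)
        - (lam / (2 * Real.sqrt n)) • CC11⁻¹.mulVec fun j => sgn (beta1 j))
    -- condition B
    (hB : ∀ j : Fin (p - q),
      |(CC21 * CC11⁻¹).mulVec W1 j - W2 j| ≤ lam / (2 * Real.sqrt n)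
        - (lam / (2 * Real.sqrt n)) *
          |((CC21 * CC11⁻¹).mulVec
              ((fun k => sgn (beta1 k)) + (2 * eta / lam) • Sig11.mulVec beta1)
            - (2 * eta / lam) • Sig21.mulVec beta1) j|) :
    ∀ j : Fin (p - q),
      |(CC21.mulVec (Real.sqrt n • uhat1)
          + (eta / Real.sqrt n) • Sig21.mulVec beta1 - W2) j| ≤ lam / (2 * Real.sqrt n)
      ∧
      |((CC21 * CC11⁻¹).mulVec
            (W1 - (eta / Real.sqrt n) • Sig11.mulVec beta1
              - (lam / (2 * Real.sqrt n)) • fun k => sgn (beta1 k))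
          + (eta / Real.sqrt n) • Sig21.mulVec beta1 - W2) j| ≤ lam / (2 * Real.sqrt n) := by
  have hct : lam / (2 * Real.sqrt n) * (2 * eta / lam) = eta / Real.sqrt n := by
    field_simp
  have hbound : ∀ j : Fin (p - q),
      |((CC21 * CC11⁻¹).mulVec
            (W1 - (eta / Real.sqrt n) • Sig11.mulVec beta1
              - (lam / (2 * Real.sqrt n)) • fun k => sgn (beta1 k))
          + (eta / Real.sqrt n) • Sig21.mulVec beta1 - W2) j| ≤ lam / (2 * Real.sqrt n) := by
    intro j
    rw [mulVec_sub_smul_sub_smul_add_smul_sub _ _ _ _ _ _ hct]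
    exact abs_sub_mul_le_of_abs_le_sub_mul (by positivity) (hB j)
  have huhat1_eq : CC21.mulVec (Real.sqrt n • uhat1)
      = (CC21 * CC11⁻¹).mulVec
          (W1 - (eta / Real.sqrt n) • Sig11.mulVec beta1
            - (lam / (2 * Real.sqrt n)) • fun k => sgn (beta1 k)) := by
    rw [huhat1, ← mulVec_mulVec]
    simp only [mulVec_sub, mulVec_smul]
  exact fun j => ⟨huhat1_eq ▸ hbound j, hbound j⟩
end

section
/- Suppose conditions A and B both hold. Define û₁ ∈ ℝ^q by √n·û₁ = 𝒞₁₁^{-1}W(1) − (η/√n)·𝒞₁₁^{-1}Σ₁₁β₁* − (λ/(2√n))·𝒞₁₁^{-1}sign(β₁*), and define β̂ ∈ ℝ^p by β̂_j = (β₁*)_j + (û₁)_j for j ∈ {1,…,q} and β̂_j = 0 for j > q. Then there exists z ∈ ℝ^p with z_j = sign(β̂_j) = sign(β*_j) for j ≤ q and |z_j| ≤ 1 for all j, such that Xᵀy − (XᵀX + ηΣ)β̂ = (λ/2)z; consequently Σ^{1/2}β̂ is a global minimizer of the gEN criterion L. -/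
open Matrix

noncomputable def norm2sq {m : ℕ} (v : Fin m → ℝ) : ℝ := ∑ i, (v i) ^ 2

noncomputable def norm1 {m : ℕ} (v : Fin m → ℝ) : ℝ := ∑ i, |v i|

/-! Let g(β) = Xᵀy − (XᵀX + ηΣ)β. Since β̂ and β* vanish off the first q coordinates, the blocks
of g(β̂) are affine in û₁, and the formula for û₁ makes the first block equal to (λ/2)·sign(β₁*)
while condition B bounds every entry of the second block by λ/2. Condition A gives |û₁| < |β₁*|
entrywise, so β̂ has the signs of β*, and z = (2/λ)·g(β̂) is a subgradient of ‖·‖₁ at β̂.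
In the variable β = Σ^{-1/2}β̃ the criterion L is the convex function
‖y − Xβ‖² + λ‖β‖₁ + η βᵀΣβ, whose optimality condition at β̂ is exactly g(β̂) = (λ/2)z. -/

lemma sgn_mul_self (x : ℝ) : sgn x * x = |x| := by
  unfold sgn
  rcases lt_trichotomy x 0 with h | rfl | h
  · rw [if_neg h.not_gt, if_pos h, abs_of_neg h]; ring
  · simp
  · rw [if_pos h, one_mul, abs_of_pos h]

lemma abs_sgn_le_one (x : ℝ) : |sgn x| ≤ 1 := by
  unfold sgn
  split_ifs <;> norm_num

lemma sgn_add_of_abs_lt {b u : ℝ} (h : |u| < |b|) : sgn (b + u) = sgn b := by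
  unfold sgn
  rcases lt_trichotomy b 0 with hb | rfl | hb
  · rw [abs_of_neg hb] at h
    have hu := abs_lt.mp h
    rw [if_neg (by linarith), if_pos (by linarith), if_neg hb.not_gt, if_pos hb]
  · exact absurd h (by simp)
  · rw [abs_of_pos hb] at h
    have hu := abs_lt.mp h
    rw [if_pos (by linarith), if_pos hb]

lemma Fin.forall_of_castLE_of_natAdd {q p : ℕ} (hqp : q ≤ p) {P : Fin p → Prop}
    (h₁ : ∀ j : Fin q, P (Fin.castLE hqp j))
    (h₂ : ∀ j : Fin (p - q), P (Fin.cast (by omega) (Fin.natAdd q j))) (i : Fin p) : P i := by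
  by_cases hi : (i : ℕ) < q
  · exact h₁ ⟨i, hi⟩
  · convert h₂ ⟨i - q, by omega⟩
    ext; simp only [Fin.natAdd_mk, Fin.cast_mk]; omega

lemma mulVec_eq_submatrix_castLE_mulVec {ι α : Type*} [NonUnitalNonAssocSemiring α] {p q : ℕ}
    (hqp : q ≤ p) (A : Matrix ι (Fin p) α) {v : Fin p → α}
    (hv : ∀ j : Fin p, q ≤ (j : ℕ) → v j = 0) :
    A *ᵥ v = A.submatrix id (Fin.castLE hqp) *ᵥ fun j => v (Fin.castLE hqp j) := by
  ext i
  refine (Fintype.sum_of_injective _ (Fin.castLE_injective hqp) _ _ (fun k hk => ?_)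
    fun _ => rfl).symm
  rw [hv k (not_lt.mp fun h => hk ⟨⟨k, h⟩, rfl⟩), mul_zero]

lemma norm2sq_eq_dotProduct {m : ℕ} (v : Fin m → ℝ) : norm2sq v = v ⬝ᵥ v := by
  simp only [norm2sq, dotProduct, sq]

lemma norm2sq_sub {m : ℕ} (a b : Fin m → ℝ) :
    norm2sq (a - b) = norm2sq a - 2 * (a ⬝ᵥ b) + norm2sq b := by
  simp only [norm2sq_eq_dotProduct, sub_dotProduct, dotProduct_sub, dotProduct_comm b a]
  ring

lemma dotProduct_le_norm1 {m : ℕ} {z : Fin m → ℝ} (hz : ∀ i, |z i| ≤ 1) (v : Fin m → ℝ) :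
    z ⬝ᵥ v ≤ norm1 v :=
  Finset.sum_le_sum fun i _ => calc
    z i * v i ≤ |z i| * |v i| := (le_abs_self _).trans (abs_mul _ _).le
    _ ≤ |v i| := mul_le_of_le_one_left (abs_nonneg _) (hz i)

lemma elasticNet_le_of_subgradient {n p : ℕ} (X : Matrix (Fin n) (Fin p) ℝ) (y : Fin n → ℝ)
    {Sig : Matrix (Fin p) (Fin p) ℝ} (hSig : Sig.PosSemidef) {lam eta : ℝ} (hlam : 0 ≤ lam)
    (heta : 0 ≤ eta) {bhat z : Fin p → ℝ} (hz : ∀ i, |z i| ≤ 1) (hzb : z ⬝ᵥ bhat = norm1 bhat)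
    (hgrad : Xᵀ *ᵥ y - (Xᵀ * X + eta • Sig) *ᵥ bhat = (lam / 2) • z) (b : Fin p → ℝ) :
    norm2sq (y - X *ᵥ bhat) + lam * norm1 bhat + eta * (bhat ⬝ᵥ Sig *ᵥ bhat)
      ≤ norm2sq (y - X *ᵥ b) + lam * norm1 b + eta * (b ⬝ᵥ Sig *ᵥ b) := by
  set d := b - bhat
  set r := y - X *ᵥ bhat
  have hSigT : Sigᵀ = Sig := by
    simpa [conjTranspose_eq_transpose_of_trivial] using hSig.isHermitian.eq
  have hXr : Xᵀ *ᵥ r = (lam / 2) • z + eta • Sig *ᵥ bhat := by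
    rw [← hgrad, add_mulVec, ← mulVec_mulVec, smul_mulVec, mulVec_sub]; abel
  have hres : y - X *ᵥ b = r - X *ᵥ d := by
    simp only [r, d, mulVec_sub]; abel
  have hquad : b ⬝ᵥ Sig *ᵥ b = bhat ⬝ᵥ Sig *ᵥ bhat + 2 * (d ⬝ᵥ Sig *ᵥ bhat) + d ⬝ᵥ Sig *ᵥ d := by
    have hsymm : bhat ⬝ᵥ Sig *ᵥ d = d ⬝ᵥ Sig *ᵥ bhat := by
      rw [dotProduct_mulVec, ← mulVec_transpose, hSigT, dotProduct_comm]
    rw [show b = bhat + d by simp [d], mulVec_add, dotProduct_add, add_dotProduct,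
      add_dotProduct, hsymm]
    ring
  have hcross : r ⬝ᵥ X *ᵥ d = lam / 2 * (z ⬝ᵥ b - norm1 bhat) + eta * (d ⬝ᵥ Sig *ᵥ bhat) := by
    rw [dotProduct_mulVec, ← mulVec_transpose, hXr, add_dotProduct, smul_dotProduct,
      smul_dotProduct, ← hzb, dotProduct_comm (Sig *ᵥ bhat), smul_eq_mul, smul_eq_mul,
      dotProduct_sub]
  have hXd : 0 ≤ norm2sq (X *ᵥ d) := Finset.sum_nonneg fun i _ => sq_nonneg _
  have hSd : 0 ≤ d ⬝ᵥ Sig *ᵥ d := by simpa using hSig.dotProduct_mulVec_nonneg d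
  have hzb' := mul_le_mul_of_nonneg_left (dotProduct_le_norm1 hz b) hlam
  -- with d = b - β̂ the gap is ‖X d‖² + η dᵀΣd + λ (‖b‖₁ - z ⬝ᵥ b)
  rw [hres, norm2sq_sub r, hcross, hquad]
  linarith [mul_nonneg heta hSd]

lemma norm2sq_mulVec_of_mul_self_eq {p : ℕ} {R Sig : Matrix (Fin p) (Fin p) ℝ}
    (hR : R.IsHermitian) (hRR : R * R = Sig) (w : Fin p → ℝ) :
    norm2sq (R *ᵥ w) = w ⬝ᵥ Sig *ᵥ w := by
  have hRT : Rᵀ = R := by simpa [conjTranspose_eq_transpose_of_trivial] using hR.eq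
  rw [norm2sq_eq_dotProduct, dotProduct_mulVec, ← mulVec_transpose, hRT, mulVec_mulVec, hRR,
    dotProduct_comm]

lemma gEN_le_of_subgradient {n p : ℕ} (X : Matrix (Fin n) (Fin p) ℝ) (y : Fin n → ℝ)
    {Sig R : Matrix (Fin p) (Fin p) ℝ} (hR : R.PosDef) (hRR : R * R = Sig) {lam eta : ℝ}
    (hlam : 0 ≤ lam) (heta : 0 ≤ eta) (L : (Fin p → ℝ) → ℝ)
    (hL : ∀ bt, L bt = norm2sq (fun i => y i - X.mulVec (R⁻¹.mulVec bt) i)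
      + lam * norm1 (R⁻¹.mulVec bt) + eta * norm2sq bt)
    {bhat z : Fin p → ℝ} (hz : ∀ i, |z i| ≤ 1) (hzb : z ⬝ᵥ bhat = norm1 bhat)
    (hgrad : Xᵀ *ᵥ y - (Xᵀ * X + eta • Sig) *ᵥ bhat = (lam / 2) • z) (b : Fin p → ℝ) :
    L (R *ᵥ bhat) ≤ L b := by
  have hSig : Sig.PosSemidef := by
    simpa only [← hRR, hR.isHermitian.eq] using posSemidef_conjTranspose_mul_self R
  have hdet : IsUnit R.det := (isUnit_iff_isUnit_det R).mp hR.isUnit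
  have hRinv : ∀ w, R⁻¹ *ᵥ (R *ᵥ w) = w := fun w => by
    rw [mulVec_mulVec, nonsing_inv_mul _ hdet, one_mulVec]
  obtain ⟨β, rfl⟩ : ∃ β, b = R *ᵥ β :=
    ⟨R⁻¹ *ᵥ b, by rw [mulVec_mulVec, mul_nonsing_inv _ hdet, one_mulVec]⟩
  rw [hL, hL, hRinv, hRinv, norm2sq_mulVec_of_mul_self_eq hR.isHermitian hRR,
    norm2sq_mulVec_of_mul_self_eq hR.isHermitian hRR]
  exact elasticNet_le_of_subgradient X y hSig hlam heta hz hzb hgrad β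

lemma exists_subgradient_of_castLE_of_natAdd {p q : ℕ} (hqp : q ≤ p) {lam : ℝ} (hlam : 0 < lam)
    {g bhat : Fin p → ℝ}
    (hg₁ : ∀ j : Fin q, g (Fin.castLE hqp j) = lam / 2 * sgn (bhat (Fin.castLE hqp j)))
    (hg₂ : ∀ j : Fin (p - q), |g (Fin.cast (by omega) (Fin.natAdd q j))| ≤ lam / 2)
    (hbhat : ∀ j : Fin p, q ≤ (j : ℕ) → bhat j = 0) :
    ∃ z : Fin p → ℝ, (∀ j : Fin q, z (Fin.castLE hqp j) = sgn (bhat (Fin.castLE hqp j))) ∧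
      (∀ i, |z i| ≤ 1) ∧ z ⬝ᵥ bhat = norm1 bhat ∧ g = (lam / 2) • z := by
  have hz₁ : ∀ j : Fin q, 2 / lam * g (Fin.castLE hqp j) = sgn (bhat (Fin.castLE hqp j)) :=
    fun j => by rw [hg₁]; field_simp
  have hbhat₂ : ∀ j : Fin (p - q), bhat (Fin.cast (by omega) (Fin.natAdd q j)) = 0 :=
    fun j => hbhat _ (by simp)
  have hzb : ∀ i, ((2 / lam) • g) i * bhat i = |bhat i| := by
    refine Fin.forall_of_castLE_of_natAdd hqp (fun j => ?_) fun j => ?_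
    · rw [Pi.smul_apply, smul_eq_mul, hz₁, sgn_mul_self]
    · rw [hbhat₂, mul_zero, abs_zero]
  refine ⟨(2 / lam) • g, hz₁, Fin.forall_of_castLE_of_natAdd hqp (fun j => ?_) (fun j => ?_),
    Finset.sum_congr rfl fun i _ => hzb i, ?_⟩
  · simpa only [Pi.smul_apply, smul_eq_mul, hz₁] using abs_sgn_le_one _
  · rw [Pi.smul_apply, smul_eq_mul, abs_mul, abs_of_pos (by positivity)]
    calc 2 / lam * _ ≤ 2 / lam * (lam / 2) := mul_le_mul_of_nonneg_left (hg₂ j) (by positivity)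
      _ = 1 := by field_simp
  · rw [smul_smul, div_mul_div_cancel₀ two_ne_zero, div_self hlam.ne', one_smul]

lemma gradient_comp_eq {n p q : ℕ} {κ : Type*} (hqp : q ≤ p)
    (X : Matrix (Fin n) (Fin p) ℝ) (Sig : Matrix (Fin p) (Fin p) ℝ) (eta : ℝ) (eps : Fin n → ℝ)
    {betastar bhat : Fin p → ℝ} (hbs : ∀ j : Fin p, q ≤ (j : ℕ) → betastar j = 0)
    (hbh : ∀ j : Fin p, q ≤ (j : ℕ) → bhat j = 0) (f : κ → Fin p) :
    (fun k => (Xᵀ *ᵥ (X *ᵥ betastar + eps) - (Xᵀ * X + eta • Sig) *ᵥ bhat) (f k))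
      = (X.submatrix id f)ᵀ *ᵥ eps
        - ((X.submatrix id f)ᵀ * X.submatrix id (Fin.castLE hqp)
            + eta • Sig.submatrix f (Fin.castLE hqp))
          *ᵥ ((fun j => bhat (Fin.castLE hqp j)) - fun j => betastar (Fin.castLE hqp j))
        - eta • (Sig.submatrix f (Fin.castLE hqp) *ᵥ fun j => betastar (Fin.castLE hqp j)) := by
  have hXs := mulVec_eq_submatrix_castLE_mulVec hqp X hbs
  have hXh := mulVec_eq_submatrix_castLE_mulVec hqp X hbh
  have hSh := mulVec_eq_submatrix_castLE_mulVec hqp Sig hbh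
  have hG : (Xᵀ * X + eta • Sig) *ᵥ bhat = Xᵀ *ᵥ (X.submatrix id (Fin.castLE hqp) *ᵥ
      fun j => bhat (Fin.castLE hqp j)) + eta • (Sig *ᵥ bhat) := by
    rw [add_mulVec, ← mulVec_mulVec, smul_mulVec, hXh]
  ext k
  have hS : (Sig *ᵥ bhat) (f k) = (Sig.submatrix f (Fin.castLE hqp) *ᵥ
      fun j => bhat (Fin.castLE hqp j)) k := by rw [hSh]; rfl
  have hT : ∀ v, (Xᵀ *ᵥ v) (f k) = ((X.submatrix id f)ᵀ *ᵥ v) k := fun _ => rfl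
  simp only [hG, hXs, Pi.sub_apply, Pi.add_apply, Pi.smul_apply, smul_eq_mul, hS, hT, mulVec_add,
    mulVec_sub, add_mulVec, smul_mulVec, ← mulVec_mulVec]
  ring

lemma smul_mulVec_eq_of_sqrt_smul_eq {q : ℕ} {κ : Type*} {n eta lam : ℝ} (hn : 0 < n)
    {Ci : Matrix (Fin q) (Fin q) ℝ} {u a b c : Fin q → ℝ}
    (hu : Real.sqrt n • u = Ci *ᵥ a - (eta / Real.sqrt n) • Ci *ᵥ b
      - (lam / (2 * Real.sqrt n)) • Ci *ᵥ c) (D : Matrix κ (Fin q) ℝ) :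
    n • (D *ᵥ u) = Real.sqrt n • ((D * Ci) *ᵥ a) - eta • ((D * Ci) *ᵥ b)
      - (lam / 2) • ((D * Ci) *ᵥ c) := by
  have hs : Real.sqrt n ≠ 0 := by positivity
  have h₁ : Real.sqrt n * (eta / Real.sqrt n) = eta := by field_simp
  have h₂ : Real.sqrt n * (lam / (2 * Real.sqrt n)) = lam / 2 := by field_simp
  rw [show n • (D *ᵥ u) = Real.sqrt n • (D *ᵥ (Real.sqrt n • u)) by
    rw [mulVec_smul, smul_smul, Real.mul_self_sqrt hn.le], hu]
  simp only [mulVec_sub, mulVec_smul, mulVec_mulVec, smul_sub, smul_smul, h₁, h₂]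

lemma gradient_comp_eq_of_sqrt_smul_eq {n p q : ℕ} {κ : Type*} (hn : 0 < n) (hqp : q ≤ p)
    (X : Matrix (Fin n) (Fin p) ℝ) (Sig : Matrix (Fin p) (Fin p) ℝ) {eta lam : ℝ} (hlam : lam ≠ 0)
    (eps : Fin n → ℝ) {betastar bhat : Fin p → ℝ}
    (hbs : ∀ j : Fin p, q ≤ (j : ℕ) → betastar j = 0)
    (hbh : ∀ j : Fin p, q ≤ (j : ℕ) → bhat j = 0) {Ci : Matrix (Fin q) (Fin q) ℝ}
    {a b c : Fin q → ℝ}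
    (hu : Real.sqrt n • ((fun j => bhat (Fin.castLE hqp j)) - fun j => betastar (Fin.castLE hqp j))
      = Ci *ᵥ a - (eta / Real.sqrt n) • Ci *ᵥ b - (lam / (2 * Real.sqrt n)) • Ci *ᵥ c)
    (f : κ → Fin p) :
    (fun k => (Xᵀ *ᵥ (X *ᵥ betastar + eps) - (Xᵀ * X + eta • Sig) *ᵥ bhat) (f k))
      = -(Real.sqrt n • ((((n : ℝ)⁻¹ • ((X.submatrix id f)ᵀ * X.submatrix id (Fin.castLE hqp))
            + (eta / n) • Sig.submatrix f (Fin.castLE hqp)) * Ci) *ᵥ a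
          - (Real.sqrt n)⁻¹ • (X.submatrix id f)ᵀ *ᵥ eps))
        + (lam / 2) • ((((n : ℝ)⁻¹ • ((X.submatrix id f)ᵀ * X.submatrix id (Fin.castLE hqp))
            + (eta / n) • Sig.submatrix f (Fin.castLE hqp)) * Ci) *ᵥ (c + (2 * eta / lam) • b)
          - (2 * eta / lam) •
            (Sig.submatrix f (Fin.castLE hqp) *ᵥ fun j => betastar (Fin.castLE hqp j))) := by
  have hn' : (0 : ℝ) < n := by exact_mod_cast hn
  have hnorm : (((n : ℝ)⁻¹ • ((X.submatrix id f)ᵀ * X.submatrix id (Fin.castLE hqp))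
      + (eta / n) • Sig.submatrix f (Fin.castLE hqp))) = (n : ℝ)⁻¹ •
      ((X.submatrix id f)ᵀ * X.submatrix id (Fin.castLE hqp)
        + eta • Sig.submatrix f (Fin.castLE hqp)) := by
    rw [smul_add, smul_smul, inv_mul_eq_div]
  have hAu := smul_mulVec_eq_of_sqrt_smul_eq hn' hu (((n : ℝ)⁻¹ •
    ((X.submatrix id f)ᵀ * X.submatrix id (Fin.castLE hqp))
      + (eta / n) • Sig.submatrix f (Fin.castLE hqp)))
  rw [hnorm, smul_mulVec, smul_smul, mul_inv_cancel₀ hn'.ne', one_smul, ← hnorm] at hAu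
  have h₂ : lam / 2 * (2 * eta / lam) = eta := by field_simp
  rw [gradient_comp_eq hqp X Sig eta eps hbs hbh f, hAu]
  simp only [mulVec_add, mulVec_smul, smul_sub, smul_add, smul_smul, h₂,
    mul_inv_cancel₀ (Real.sqrt_pos.2 hn').ne', one_smul]
  abel

lemma posDef_smul_transpose_mul_self_add_smul {m k : Type*} [Fintype m] [Fintype k]
    (A : Matrix m k ℝ) {S : Matrix k k ℝ} (hS : S.PosDef) {c d : ℝ} (hc : 0 ≤ c) (hd : 0 < d) :
    (c • (Aᵀ * A) + d • S).PosDef := by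
  refine PosDef.posSemidef_add (PosSemidef.smul ?_ hc) (hS.smul hd)
  simpa only [conjTranspose_eq_transpose_of_trivial] using posSemidef_conjTranspose_mul_self A

lemma abs_lt_of_sqrt_mul_eq {n u a b c β eta lam : ℝ} (hn : 0 < n) (heta : 0 ≤ eta)
    (hlam : 0 ≤ lam) (hu : Real.sqrt n * u = a - eta / Real.sqrt n * b - lam / (2 * Real.sqrt n) * c)
    (hA : |a| < Real.sqrt n * (|β| - lam / (2 * n) * |c| - eta / n * |b|)) : |u| < |β| := by
  obtain ⟨s, hs, rfl⟩ : ∃ s, 0 < s ∧ n = s * s :=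
    ⟨Real.sqrt n, Real.sqrt_pos.2 hn, (Real.mul_self_sqrt hn.le).symm⟩
  rw [Real.sqrt_mul_self hs.le] at hu hA
  have hsu : s * |u| ≤ |a| + eta / s * |b| + lam / (2 * s) * |c| := by
    rw [← abs_of_pos hs, ← abs_mul, hu, abs_of_pos hs]
    calc _ ≤ |a| + |eta / s * b| + |lam / (2 * s) * c| :=
          (abs_sub _ _).trans (add_le_add_left (abs_sub _ _) _)
      _ = _ := by rw [abs_mul, abs_mul, abs_of_nonneg (by positivity : 0 ≤ eta / s),
        abs_of_nonneg (by positivity : 0 ≤ lam / (2 * s))]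
  have hA' : s * (|β| - lam / (2 * (s * s)) * |c| - eta / (s * s) * |b|)
      = s * |β| - lam / (2 * s) * |c| - eta / s * |b| := by
    field_simp
  exact lt_of_mul_lt_mul_left (by linarith) hs.le

lemma abs_neg_sqrt_mul_add_le {n a b lam : ℝ} (hn : 0 < n) (hlam : 0 ≤ lam)
    (hB : |a| ≤ lam / (2 * Real.sqrt n) - lam / (2 * Real.sqrt n) * |b|) :
    |-(Real.sqrt n * a) + lam / 2 * b| ≤ lam / 2 := by
  have hs : 0 < Real.sqrt n := Real.sqrt_pos.2 hn
  have hsa : Real.sqrt n * |a| ≤ lam / 2 - lam / 2 * |b| := by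
    calc _ ≤ Real.sqrt n * (lam / (2 * Real.sqrt n) - lam / (2 * Real.sqrt n) * |b|) :=
          mul_le_mul_of_nonneg_left hB hs.le
      _ = _ := by field_simp
  calc _ ≤ |-(Real.sqrt n * a)| + |lam / 2 * b| := abs_add_le _ _
    _ = Real.sqrt n * |a| + lam / 2 * |b| := by
      rw [abs_neg, abs_mul, abs_mul, abs_of_pos hs, abs_of_nonneg (by positivity : 0 ≤ lam / 2)]
    _ ≤ lam / 2 := by linarith

/-- Under conditions A and B, with û₁ defined by the explicit formula and β̂ the vector
    equal to β₁* + û₁ on the first q coordinates and 0 afterwards, there exists z with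
    z_j = sign(β̂_j) = sign(β*_j) for j ≤ q and |z_j| ≤ 1 for all j such that
    Xᵀy − (XᵀX + ηΣ)β̂ = (λ/2)z; consequently Σ^{1/2}β̂ globally minimizes the gEN
    criterion L. -/
theorem stmt6 (n p q : ℕ) (hn : 1 ≤ n) (hqp : q ≤ p)
    (X : Matrix (Fin n) (Fin p) ℝ) (eps : Fin n → ℝ)
    (betastar : Fin p → ℝ)
    (hbeta2 : ∀ j : Fin p, q ≤ (j : ℕ) → betastar j = 0)
    (y : Fin n → ℝ) (hy : y = X.mulVec betastar + eps)
    (Sig : Matrix (Fin p) (Fin p) ℝ) (hSig : Sig.PosDef)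
    -- R is the symmetric positive definite square root Σ^{1/2}, so Σ^{-1/2} = R⁻¹
    (R : Matrix (Fin p) (Fin p) ℝ) (hR : R.PosDef) (hRR : R * R = Sig)
    (lam eta : ℝ) (hlam : 0 < lam) (heta : 0 < eta)
    (L : (Fin p → ℝ) → ℝ)
    (hL : ∀ bt, L bt =
      norm2sq (fun i => y i - X.mulVec (R⁻¹.mulVec bt) i)
        + lam * norm1 (R⁻¹.mulVec bt) + eta * norm2sq bt)
    (X1 : Matrix (Fin n) (Fin q) ℝ) (hX1 : X1 = X.submatrix id (Fin.castLE hqp))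
    (X2 : Matrix (Fin n) (Fin (p - q)) ℝ)
    (hX2 : X2 = X.submatrix id
      (fun j => Fin.cast (by omega : q + (p - q) = p) (Fin.natAdd q j)))
    (Sig11 : Matrix (Fin q) (Fin q) ℝ)
    (hSig11 : Sig11 = Sig.submatrix (Fin.castLE hqp) (Fin.castLE hqp))
    (Sig21 : Matrix (Fin (p - q)) (Fin q) ℝ)
    (hSig21 : Sig21 = Sig.submatrix
      (fun j => Fin.cast (by omega : q + (p - q) = p) (Fin.natAdd q j)) (Fin.castLE hqp))
    (beta1 : Fin q → ℝ) (hbeta1q : beta1 = fun j => betastar (Fin.castLE hqp j))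
    (C11 : Matrix (Fin q) (Fin q) ℝ) (hC11 : C11 = ((n : ℝ)⁻¹) • (X1ᵀ * X1))
    (C21 : Matrix (Fin (p - q)) (Fin q) ℝ) (hC21 : C21 = ((n : ℝ)⁻¹) • (X2ᵀ * X1))
    (W1 : Fin q → ℝ) (hW1 : W1 = ((Real.sqrt n)⁻¹) • X1ᵀ.mulVec eps)
    (W2 : Fin (p - q) → ℝ) (hW2 : W2 = ((Real.sqrt n)⁻¹) • X2ᵀ.mulVec eps)
    (CC11 : Matrix (Fin q) (Fin q) ℝ) (hCC11 : CC11 = C11 + (eta / n) • Sig11)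
    (CC21 : Matrix (Fin (p - q)) (Fin q) ℝ) (hCC21 : CC21 = C21 + (eta / n) • Sig21)
    -- definition of û₁
    (uhat1 : Fin q → ℝ)
    (huhat1 : Real.sqrt n • uhat1
      = CC11⁻¹.mulVec W1
        - (eta / Real.sqrt n) • CC11⁻¹.mulVec (Sig11.mulVec beta1)
        - (lam / (2 * Real.sqrt n)) • CC11⁻¹.mulVec fun j => sgn (beta1 j))
    -- condition A
    (hA : ∀ j : Fin q,
      |CC11⁻¹.mulVec W1 j| < Real.sqrt n *
        (|beta1 j| - (lam / (2 * n)) * |(CC11⁻¹.mulVec fun k => sgn (beta1 k)) j|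
          - (eta / n) * |CC11⁻¹.mulVec (Sig11.mulVec beta1) j|))
    -- condition B
    (hB : ∀ j : Fin (p - q),
      |(CC21 * CC11⁻¹).mulVec W1 j - W2 j| ≤ lam / (2 * Real.sqrt n)
        - (lam / (2 * Real.sqrt n)) *
          |((CC21 * CC11⁻¹).mulVec
              ((fun k => sgn (beta1 k)) + (2 * eta / lam) • Sig11.mulVec beta1)
            - (2 * eta / lam) • Sig21.mulVec beta1) j|)
    -- definition of β̂
    (bhat : Fin p → ℝ)
    (hbhat1 : ∀ j : Fin q, bhat (Fin.castLE hqp j) = beta1 j + uhat1 j)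
    (hbhat2 : ∀ j : Fin p, q ≤ (j : ℕ) → bhat j = 0) :
    ∃ z : Fin p → ℝ,
      (∀ j : Fin q, z (Fin.castLE hqp j) = sgn (bhat (Fin.castLE hqp j)) ∧
        sgn (bhat (Fin.castLE hqp j)) = sgn (betastar (Fin.castLE hqp j))) ∧
      (∀ j : Fin p, |z j| ≤ 1) ∧
      Xᵀ.mulVec y - (Xᵀ * X + eta • Sig).mulVec bhat = (lam / 2) • z ∧
      (∀ b : Fin p → ℝ, L (R.mulVec bhat) ≤ L b) := by
  subst hy hX1 hX2 hSig11 hSig21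
  have hn₀ : (0 : ℝ) < n := by exact_mod_cast hn
  have hCC : IsUnit CC11.det := by
    rw [hCC11, hC11, ← isUnit_iff_isUnit_det]
    exact (posDef_smul_transpose_mul_self_add_smul _ (hSig.submatrix (Fin.castLE_injective hqp))
      (by positivity) (by positivity)).isUnit
  have hsgn : ∀ j : Fin q, sgn (bhat (Fin.castLE hqp j)) = sgn (beta1 j) := fun j => by
    rw [hbhat1]
    refine sgn_add_of_abs_lt (abs_lt_of_sqrt_mul_eq hn₀ heta.le hlam.le ?_ (hA j))
    simpa using congrFun huhat1 j
  rw [show uhat1 = (fun j => bhat (Fin.castLE hqp j)) - fun j => betastar (Fin.castLE hqp j) by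
    ext j; simp [hbhat1, hbeta1q]] at huhat1
  have hgrad := fun {κ : Type} (f : κ → Fin p) =>
    gradient_comp_eq_of_sqrt_smul_eq hn hqp X Sig hlam.ne' eps hbeta2 hbhat2 huhat1 f
  simp only [← hbeta1q] at hgrad
  have hg₁ : ∀ j : Fin q, (Xᵀ *ᵥ (X *ᵥ betastar + eps) - (Xᵀ * X + eta • Sig) *ᵥ bhat)
      (Fin.castLE hqp j) = lam / 2 * sgn (bhat (Fin.castLE hqp j)) := fun j => by
    have h := congrFun (hgrad (Fin.castLE hqp)) j
    rw [← hC11, ← hCC11, ← hW1, mul_nonsing_inv _ hCC] at h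
    rw [h, hsgn]
    simp
  have hg₂ : ∀ j : Fin (p - q), |(Xᵀ *ᵥ (X *ᵥ betastar + eps) - (Xᵀ * X + eta • Sig) *ᵥ bhat)
      (Fin.cast (by omega) (Fin.natAdd q j))| ≤ lam / 2 := fun j => by
    have h := congrFun (hgrad fun j => Fin.cast (by omega) (Fin.natAdd q j)) j
    rw [← hC21, ← hCC21, ← hW2] at h
    rw [h]
    simpa only [Pi.add_apply, Pi.neg_apply, Pi.smul_apply, Pi.sub_apply, smul_eq_mul]
      using abs_neg_sqrt_mul_add_le hn₀ hlam.le (hB j)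
  obtain ⟨z, hz₁, hz, hzb, hgz⟩ := exists_subgradient_of_castLE_of_natAdd hqp hlam hg₁ hg₂ hbhat2
  exact ⟨z, fun j => ⟨hz₁ j, by rw [hsgn, hbeta1q]⟩, hz, hgz,
    gEN_le_of_subgradient X _ hR hRR hlam.le heta.le L hL hz hzb hgz⟩
end

section
/- Assume M₁ < β_min²/(9σ²), λ/n < 2β_min/(3M₂√q), and η/n < (1/(3M₂·λ_max(Σ₁₁)))·(β_min/‖β₁*‖₂). Then, setting κ = β_min²/(9M₁σ²) (so κ > 1), the probability that condition A fails satisfies: ℙ(A_nᶜ) ≤ q·exp(−(n/2)·(κ − √(2κ − 1))) + q·ℙ(λ_max(H_A H_Aᵀ) > M₁) + 2q·ℙ(λ_max(𝒞₁₁^{-1}) > M₂). -/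
/-!
Outside the union of the events `‖ε‖² ≥ nκσ²`, `λ_max(H_A H_Aᵀ) > M₁` and `λ_max(𝒞₁₁⁻¹) > M₂`,
condition A holds at every coordinate `j`. Indeed `𝒞₁₁⁻¹ W(1) = H_A ε`, and Cauchy–Schwarz gives
`|(H_A ε)_j|² ≤ (H_A H_Aᵀ)_jj ‖ε‖² < M₁ nκσ² = n β_min² / 9`; the bound
`|(M v)_j| ≤ λ_max(M) ‖v‖` for positive semidefinite `M`, together with the assumptions on `λ/n`
and `η/n`, makes each of the two bias terms smaller than `β_min / 3`. A union bound over the `q`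
coordinates gives the factor `q`. The Gaussian term is a Chernoff bound for `‖ε‖²`: since
`E exp(t ε_i²) = (1 - 2tσ²)^(-1/2)`, choosing `1 - 2tσ² = 1/s` with `s = √(2κ - 1)` and using
`log s ≤ sinh (log s) = (s - s⁻¹)/2` yields `exp(-(n/2)(κ - s))`.
-/

open Matrix MeasureTheory ProbabilityTheory
open scoped ENNReal NNReal

noncomputable def norm2 {m : ℕ} (v : Fin m → ℝ) : ℝ := Real.sqrt (norm2sq v)

noncomputable def lamMax {m : ℕ} (M : Matrix (Fin m) (Fin m) ℝ) : ℝ :=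
  sSup {μ : ℝ | ∃ v : Fin m → ℝ, v ≠ 0 ∧ M.mulVec v = μ • v}

lemma norm2_eq_norm_toLp {m : ℕ} (v : Fin m → ℝ) : norm2 v = ‖WithLp.toLp 2 v‖ := by
  simp [norm2, norm2sq, EuclideanSpace.norm_eq]

lemma abs_apply_le_norm2 {m : ℕ} (v : Fin m → ℝ) (j : Fin m) : |v j| ≤ norm2 v := by
  simpa [norm2_eq_norm_toLp] using PiLp.norm_apply_le (WithLp.toLp 2 v) j

lemma sq_sgn_le_one (x : ℝ) : sgn x ^ 2 ≤ 1 := by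
  unfold sgn
  split_ifs <;> norm_num

lemma norm2_sgn_le {m : ℕ} (v : Fin m → ℝ) : norm2 (fun k => sgn (v k)) ≤ √m := by
  refine Real.sqrt_le_sqrt ?_
  simpa [norm2sq] using Finset.sum_le_card_nsmul Finset.univ _ 1 fun k _ => sq_sgn_le_one (v k)

namespace Matrix

variable {m : ℕ}

lemma setOf_mulVec_eq_smul_subset_spectrum (M : Matrix (Fin m) (Fin m) ℝ) :
    {μ : ℝ | ∃ v : Fin m → ℝ, v ≠ 0 ∧ M *ᵥ v = μ • v} ⊆ spectrum ℝ M := by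
  rintro μ ⟨v, hv, hMv⟩ hμ
  refine hv (mulVec_injective_of_isUnit hμ ?_)
  simp [sub_mulVec, hMv, Algebra.algebraMap_eq_smul_one, smul_mulVec]

variable {M : Matrix (Fin m) (Fin m) ℝ}

lemma IsHermitian.eigenvalues_le_lamMax (hM : M.IsHermitian) (i : Fin m) :
    hM.eigenvalues i ≤ lamMax M := by
  refine le_csSup (finite_real_spectrum.subset (setOf_mulVec_eq_smul_subset_spectrum M)).bddAbove
    ⟨_, fun h => hM.eigenvectorBasis.orthonormal.ne_zero i ?_, hM.mulVec_eigenvectorBasis i⟩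
  simpa using congrArg (WithLp.toLp 2) h

lemma PosSemidef.lamMax_nonneg (hM : M.PosSemidef) : 0 ≤ lamMax M :=
  Real.sSup_nonneg fun μ hμ => by
    obtain ⟨i, rfl⟩ : μ ∈ Set.range hM.1.eigenvalues :=
      hM.1.spectrum_real_eq_range_eigenvalues ▸ setOf_mulVec_eq_smul_subset_spectrum M hμ
    exact hM.eigenvalues_nonneg i

lemma PosDef.lamMax_pos [NeZero m] (hM : M.PosDef) : 0 < lamMax M :=
  (hM.eigenvalues_pos 0).trans_le (hM.1.eigenvalues_le_lamMax 0)

open scoped RealInnerProductSpace in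
lemma IsHermitian.inner_eigenvectorBasis_mulVec (hM : M.IsHermitian) (i : Fin m)
    (v : Fin m → ℝ) :
    ⟪hM.eigenvectorBasis i, WithLp.toLp 2 (M *ᵥ v)⟫ =
      hM.eigenvalues i * ⟪hM.eigenvectorBasis i, WithLp.toLp 2 v⟫ := by
  have h := isSymmetric_toEuclideanLin_iff.mpr hM (hM.eigenvectorBasis i) (WithLp.toLp 2 v)
  simp only [toLpLin_apply, hM.mulVec_eigenvectorBasis] at h
  rw [← h, WithLp.toLp_smul, WithLp.toLp_ofLp, real_inner_smul_left]

lemma PosSemidef.norm2_mulVec_le (hM : M.PosSemidef) (v : Fin m → ℝ) :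
    norm2 (M *ᵥ v) ≤ lamMax M * norm2 v := by
  set b := hM.1.eigenvectorBasis
  rw [norm2_eq_norm_toLp, norm2_eq_norm_toLp, ← pow_le_pow_iff_left₀ (norm_nonneg _)
    (mul_nonneg hM.lamMax_nonneg (norm_nonneg _)) two_ne_zero, mul_pow,
    ← b.sum_sq_inner_right, ← b.sum_sq_inner_right, Finset.mul_sum]
  gcongr with i
  rw [hM.1.inner_eigenvectorBasis_mulVec, mul_pow]
  gcongr
  · exact hM.eigenvalues_nonneg i
  · exact hM.1.eigenvalues_le_lamMax i

lemma PosSemidef.abs_mulVec_apply_le (hM : M.PosSemidef) (v : Fin m → ℝ) (j : Fin m) :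
    |(M *ᵥ v) j| ≤ lamMax M * norm2 v :=
  (abs_apply_le_norm2 _ j).trans (hM.norm2_mulVec_le v)

lemma PosSemidef.abs_mulVec_apply_le_mul (hM : M.PosSemidef) {c r : ℝ} (hc : lamMax M ≤ c)
    {v : Fin m → ℝ} (hv : norm2 v ≤ r) (j : Fin m) : |(M *ᵥ v) j| ≤ c * r :=
  (hM.abs_mulVec_apply_le v j).trans
    (mul_le_mul hc hv (Real.sqrt_nonneg _) (hM.lamMax_nonneg.trans hc))

lemma PosSemidef.apply_self_le_lamMax (hM : M.PosSemidef) (j : Fin m) : M j j ≤ lamMax M := by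
  have h := hM.abs_mulVec_apply_le (Pi.single j 1) j
  rw [norm2_eq_norm_toLp, PiLp.toLp_single, PiLp.norm_single, norm_one, mul_one,
    mulVec_single_one] at h
  exact (le_abs_self _).trans h

lemma sq_mulVec_apply_le {k : ℕ} (H : Matrix (Fin k) (Fin m) ℝ) (v : Fin m → ℝ) (j : Fin k) :
    (H *ᵥ v) j ^ 2 ≤ (H * Hᵀ) j j * norm2sq v := by
  simpa [mulVec, dotProduct, mul_apply, norm2sq, sq] using
    Finset.sum_mul_sq_le_sq_mul_sq Finset.univ (H j) v

lemma abs_mulVec_apply_lt_sqrt {k : ℕ} (H : Matrix (Fin k) (Fin m) ℝ) {c r : ℝ} (hc : 0 < c)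
    (hH : lamMax (H * Hᵀ) ≤ c) {v : Fin m → ℝ} (hv : norm2sq v < r) (j : Fin k) :
    |(H *ᵥ v) j| < √(c * r) := by
  have hHH : (H * Hᵀ).PosSemidef := by simpa using posSemidef_self_mul_conjTranspose H
  rw [Real.lt_sqrt (abs_nonneg _), sq_abs]
  calc (H *ᵥ v) j ^ 2 ≤ (H * Hᵀ) j j * norm2sq v := sq_mulVec_apply_le H v j
    _ ≤ c * norm2sq v := by
      gcongr
      · exact Finset.sum_nonneg fun i _ => sq_nonneg (v i)
      · exact (hHH.apply_self_le_lamMax j).trans hH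
    _ < c * r := by gcongr

lemma PosSemidef.half_mul_abs_mulVec_sgn_lt (hM : M.PosSemidef) {c b K : ℝ}
    (hMK : lamMax M ≤ K) (hK : 0 < K) (hc : 0 ≤ c) (hcb : c < 2 * b / (3 * K * √m))
    (β : Fin m → ℝ) (j : Fin m) : c / 2 * |(M *ᵥ fun k => sgn (β k)) j| < b / 3 := by
  have hm : 0 < √(m : ℝ) := Real.sqrt_pos.mpr (by exact_mod_cast j.pos)
  rw [lt_div_iff₀ (by positivity)] at hcb
  calc c / 2 * |(M *ᵥ fun k => sgn (β k)) j| ≤ c / 2 * (K * √m) := by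
        gcongr
        exact hM.abs_mulVec_apply_le_mul hMK (norm2_sgn_le β) j
    _ < b / 3 := by linarith

lemma PosSemidef.mul_abs_mulVec_mulVec_lt (hM : M.PosSemidef) {S : Matrix (Fin m) (Fin m) ℝ}
    (hS : S.PosDef) {c b K : ℝ} (hMK : lamMax M ≤ K) (hK : 0 < K) (hc : 0 ≤ c)
    {β : Fin m → ℝ} (hβ : 0 < norm2 β) (hcb : c < 1 / (3 * K * lamMax S) * (b / norm2 β))
    (j : Fin m) : c * |(M *ᵥ S *ᵥ β) j| < b / 3 := by
  have : NeZero m := ⟨j.pos.ne'⟩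
  have hS0 := hS.lamMax_pos
  rw [one_div_mul_eq_div, div_div, lt_div_iff₀ (by positivity)] at hcb
  calc c * |(M *ᵥ S *ᵥ β) j| ≤ c * (K * (lamMax S * norm2 β)) := by
        gcongr
        exact hM.abs_mulVec_apply_le_mul hMK (hS.posSemidef.norm2_mulVec_le β) j
    _ < b / 3 := by linarith

lemma PosSemidef.abs_mulVec_apply_lt_of_lamMax_le (hM : M.PosSemidef)
    {S : Matrix (Fin m) (Fin m) ℝ} (hS : S.PosDef) {n : ℕ} {lam eta b K : ℝ}
    {W β : Fin m → ℝ} {j : Fin m} (hβ : b ≤ |β j|) (hb : 0 < b) (hlam : 0 ≤ lam)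
    (heta : 0 ≤ eta) (hK : 0 < K) (hMK : lamMax M ≤ K)
    (hlamn : lam / n < 2 * b / (3 * K * √m))
    (hetan : eta / n < 1 / (3 * K * lamMax S) * (b / norm2 β))
    (hW : |(M *ᵥ W) j| < √n * (b / 3)) :
    |(M *ᵥ W) j| < √n * (|β j| - lam / (2 * n) * |(M *ᵥ fun k => sgn (β k)) j|
      - eta / n * |(M *ᵥ S *ᵥ β) j|) := by
  have hlam_term := hM.half_mul_abs_mulVec_sgn_lt hMK hK (by positivity) hlamn β j
  have heta_term := hM.mul_abs_mulVec_mulVec_lt hS hMK hK (by positivity)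
    ((hb.trans_le hβ).trans_le (abs_apply_le_norm2 β j)) hetan j
  rw [div_mul_eq_div_div_swap]
  calc |(M *ᵥ W) j| < √n * (b / 3) := hW
    _ ≤ _ := by gcongr; linarith

end Matrix

lemma measure_compl_setOf_forall_le {Ω ι : Type*} [MeasurableSpace Ω] (μ : Measure Ω)
    [Fintype ι] {P : ι → Ω → Prop} {U : Set Ω} (h : ∀ ω ∉ U, ∀ i, P i ω) :
    μ {ω | ∀ i, P i ω}ᶜ ≤ Fintype.card ι * μ U := by
  have hsub : {ω | ∀ i, P i ω}ᶜ ⊆ ⋃ _ : ι, U := fun ω hω => by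
    obtain ⟨i, hi⟩ := not_forall.mp hω
    exact Set.mem_iUnion.mpr ⟨i, by_contra fun hU => hi (h ω hU i)⟩
  calc μ {ω | ∀ i, P i ω}ᶜ ≤ ∑ _ : ι, μ U :=
        (measure_mono hsub).trans (measure_iUnion_fintype_le _ _)
    _ = Fintype.card ι * μ U := by
        rw [Finset.sum_const, Finset.card_univ, nsmul_eq_mul]

section ChiSquaredTail

open Real

lemma Real.log_le_sub_inv_div_two {s : ℝ} (hs : 1 ≤ s) : log s ≤ (s - s⁻¹) / 2 := by
  rw [← sinh_log (by linarith)]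
  exact self_le_sinh_iff.mpr (log_nonneg hs)

lemma mgf_sq_gaussianReal {v : ℝ≥0} (hv : v ≠ 0) {t : ℝ} (ht : 2 * t * v < 1) :
    mgf (fun x => x ^ 2) (gaussianReal 0 v) t = (√(1 - 2 * t * v))⁻¹ := by
  have hv0 : (0 : ℝ) < v := by positivity
  have hb : 0 < 1 / (2 * v) - t := by
    rw [sub_pos, lt_div_iff₀ (by positivity)]
    linarith
  have hpdf : ∀ x, gaussianPDFReal 0 v x • exp (t * x ^ 2) =
      (√(2 * π * v))⁻¹ * exp (-(1 / (2 * v) - t) * x ^ 2) := fun x => by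
    rw [gaussianPDFReal_def, smul_eq_mul, mul_assoc, ← exp_add]
    congr 2
    field_simp
    ring
  rw [mgf, integral_gaussianReal_eq_integral_smul hv, funext hpdf, integral_const_mul,
    integral_gaussian, ← sqrt_inv, ← sqrt_mul (by positivity), ← sqrt_inv]
  congr 1
  have : 1 - 2 * t * v ≠ 0 := by linarith
  field_simp

variable {Ω ι : Type*} [MeasurableSpace Ω] {μ : Measure Ω} [IsProbabilityMeasure μ] [Fintype ι]
  {X : ι → Ω → ℝ} {v : ℝ≥0}

lemma measureReal_sum_sq_ge_le_exp_mul (hX : ∀ i, Measurable (X i)) (hindep : iIndepFun X μ)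
    (hv : v ≠ 0) (hlaw : ∀ i, μ.map (X i) = gaussianReal 0 v) {t : ℝ} (ht0 : 0 ≤ t)
    (ht : 2 * t * v < 1) (a : ℝ) :
    μ.real {ω | a ≤ ∑ i, X i ω ^ 2}
      ≤ exp (-t * a) * (√(1 - 2 * t * v))⁻¹ ^ Fintype.card ι := by
  set Y : ι → Ω → ℝ := fun i ω => X i ω ^ 2
  have hY : ∀ i, Measurable (Y i) := fun i => (hX i).pow_const 2
  have hYindep : iIndepFun Y μ := hindep.comp (fun _ x => x ^ 2) fun _ => by fun_prop
  have hmgf : ∀ i, mgf (Y i) μ t = (√(1 - 2 * t * v))⁻¹ := fun i => by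
    rw [← mgf_sq_gaussianReal hv ht, ← hlaw i, mgf_map (hX i).aemeasurable (by fun_prop)]
    rfl
  have hint : ∀ i ∈ Finset.univ, Integrable (fun ω => exp (t * Y i ω)) μ := fun i _ =>
    mgf_pos_iff.mp (by rw [hmgf i]; positivity)
  have h := measure_ge_le_exp_mul_mgf a ht0 (hYindep.integrable_exp_mul_sum hY hint)
  rw [hYindep.mgf_sum hY, Finset.prod_congr rfl fun i _ => hmgf i, Finset.prod_const,
    Finset.card_univ] at h
  simpa [Y, Finset.sum_apply] using h

lemma measureReal_sum_sq_ge_le_exp (hX : ∀ i, Measurable (X i)) (hindep : iIndepFun X μ)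
    (hv : v ≠ 0) (hlaw : ∀ i, μ.map (X i) = gaussianReal 0 v) {κ : ℝ} (hκ : 1 < κ) :
    μ.real {ω | Fintype.card ι * κ * v ≤ ∑ i, X i ω ^ 2}
      ≤ exp (-(Fintype.card ι / 2) * (κ - √(2 * κ - 1))) := by
  set s := √(2 * κ - 1)
  have hs : 1 < s := by rw [lt_sqrt zero_le_one]; linarith
  have hs0 : 0 < s := zero_lt_one.trans hs
  have hκs : κ * s⁻¹ = (s + s⁻¹) / 2 := by
    have hss : s ^ 2 = 2 * κ - 1 := sq_sqrt (by linarith)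
    field_simp
    linarith
  have hv0 : (0 : ℝ) < v := by positivity
  set t := (1 - s⁻¹) / (2 * v)
  have htv : t * v = (1 - s⁻¹) / 2 := by simp only [t]; field_simp
  refine (measureReal_sum_sq_ge_le_exp_mul hX hindep hv hlaw (t := t)
    (div_nonneg (by linarith [inv_lt_one_of_one_lt₀ hs]) (by positivity))
    (by linarith [inv_pos.mpr hs0]) _).trans ?_
  rw [show 1 - 2 * t * v = s⁻¹ by linarith, sqrt_inv, inv_inv, ← exp_log (sqrt_pos.mpr hs0),
    ← exp_nat_mul, ← exp_add, exp_le_exp, log_sqrt hs0.le]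
  have hlog := log_le_sub_inv_div_two hs.le
  calc -t * (Fintype.card ι * κ * v) + Fintype.card ι * (log s / 2)
      = Fintype.card ι * (log s - κ + κ * s⁻¹) / 2 := by
        linear_combination (-(Fintype.card ι : ℝ) * κ) * htv
    _ ≤ Fintype.card ι * (s - κ) / 2 := by gcongr; linarith
    _ = -(Fintype.card ι / 2) * (κ - s) := by ring

end ChiSquaredTail

theorem stmt13_general (n p q : ℕ) (hqp : q ≤ p)
    (Ω : Type*) [MeasureSpace Ω] [IsProbabilityMeasure (ℙ : Measure Ω)]
    (sigma : ℝ) (hsigma : 0 < sigma)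
    (lam eta M1 M2 : ℝ) (hlam : 0 < lam) (heta : 0 < eta) (hM1 : 0 < M1) (hM2 : 0 < M2)
    (Sig : Matrix (Fin p) (Fin p) ℝ) (hSig : Sig.PosDef)
    (Sig11 : Matrix (Fin q) (Fin q) ℝ)
    (hSig11 : Sig11 = Sig.submatrix (Fin.castLE hqp) (Fin.castLE hqp))
    -- ε has i.i.d. centered Gaussian coordinates with variance σ²
    (eps : Ω → Fin n → ℝ) (heps_meas : Measurable eps)
    (heps_indep : iIndepFun (fun i ω => eps ω i) ℙ)
    (heps_gauss : ∀ i : Fin n,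
      Measure.map (fun ω => eps ω i) ℙ = gaussianReal 0 ⟨sigma ^ 2, sq_nonneg sigma⟩)
    -- the linear model y = Xβ* + ε
    (betastar : Fin p → ℝ)
    (hbeta1 : ∀ j : Fin p, (j : ℕ) < q → betastar j ≠ 0)
    (beta1 : Fin q → ℝ) (hbeta1q : beta1 = fun j => betastar (Fin.castLE hqp j))
    (betamin : ℝ) (hbetamin : IsLeast {x : ℝ | ∃ j : Fin q, x = |beta1 j|} betamin)
    -- blocks and derived quantities
    (X1 : Ω → Matrix (Fin n) (Fin q) ℝ)
    (C11 : Ω → Matrix (Fin q) (Fin q) ℝ)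
    (hC11 : ∀ ω, C11 ω = ((n : ℝ)⁻¹) • ((X1 ω)ᵀ * X1 ω))
    (W1 : Ω → Fin q → ℝ) (hW1 : ∀ ω, W1 ω = ((Real.sqrt n)⁻¹) • (X1 ω)ᵀ.mulVec (eps ω))
    (CC11 : Ω → Matrix (Fin q) (Fin q) ℝ)
    (hCC11 : ∀ ω, CC11 ω = C11 ω + (eta / n) • Sig11)
    (HA : Ω → Matrix (Fin q) (Fin n) ℝ)
    (hHA : ∀ ω, HA ω = ((Real.sqrt n)⁻¹) • ((CC11 ω)⁻¹ * (X1 ω)ᵀ))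
    -- the event A_n
    (An : Set Ω)
    (hAn : An = {ω | ∀ j : Fin q,
      |(CC11 ω)⁻¹.mulVec (W1 ω) j| < Real.sqrt n *
        (|beta1 j| - (lam / (2 * n)) * |((CC11 ω)⁻¹.mulVec fun k => sgn (beta1 k)) j|
          - (eta / n) * |(CC11 ω)⁻¹.mulVec (Sig11.mulVec beta1) j|)})
    -- assumptions on the constants
    (hM1lt : M1 < betamin ^ 2 / (9 * sigma ^ 2))
    (hlamn : lam / n < 2 * betamin / (3 * M2 * Real.sqrt q))
    (hetan : eta / n < (1 / (3 * M2 * lamMax Sig11)) * (betamin / norm2 beta1))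
    (kappa : ℝ) (hkappa : kappa = betamin ^ 2 / (9 * M1 * sigma ^ 2)) :
    ℙ Anᶜ
      ≤ ENNReal.ofReal
          ((q : ℝ) * Real.exp (-(n / 2 : ℝ) * (kappa - Real.sqrt (2 * kappa - 1))))
        + (q : ℝ≥0∞) * ℙ {ω | M1 < lamMax (HA ω * (HA ω)ᵀ)}
        + (2 * q : ℝ≥0∞) * ℙ {ω | M2 < lamMax ((CC11 ω)⁻¹)} := by
  set B := {ω | (n : ℝ) * kappa * sigma ^ 2 ≤ ∑ i, eps ω i ^ 2}
  set E2 := {ω | M1 < lamMax (HA ω * (HA ω)ᵀ)}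
  set E3 := {ω | M2 < lamMax ((CC11 ω)⁻¹)}
  have hβ : ∀ j, betamin ≤ |beta1 j| := fun j => hbetamin.2 ⟨j, rfl⟩
  have hbm : 0 < betamin := by
    obtain ⟨⟨j, hj⟩, -⟩ := hbetamin
    rw [hj, hbeta1q]
    exact abs_pos.mpr (hbeta1 _ (by simp))
  have hκ : 1 < kappa := by
    rw [hkappa, one_lt_div (by positivity)]
    rw [lt_div_iff₀ (by positivity)] at hM1lt
    linarith
  have hB : ℙ B ≤ ENNReal.ofReal (Real.exp (-(n / 2 : ℝ) * (kappa - √(2 * kappa - 1)))) := by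
    have h := measureReal_sum_sq_ge_le_exp (X := fun i ω => eps ω i)
      (v := ⟨sigma ^ 2, sq_nonneg sigma⟩) (fun i => (measurable_pi_apply i).comp heps_meas)
      heps_indep (NNReal.coe_ne_zero.mp (pow_pos hsigma 2).ne') heps_gauss hκ
    rw [Fintype.card_fin] at h
    exact (ENNReal.le_ofReal_iff_toReal_le (measure_ne_top _ _) (Real.exp_nonneg _)).mpr h
  have hSig11pd : Sig11.PosDef := hSig11 ▸ hSig.submatrix (Fin.castLE_injective hqp)
  have hN : ∀ ω, ((CC11 ω)⁻¹).PosSemidef := fun ω => by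
    rw [hCC11, hC11]
    refine PosSemidef.inv (PosSemidef.add (PosSemidef.smul ?_ (by positivity))
      (hSig11pd.posSemidef.smul (by positivity)))
    simpa using posSemidef_conjTranspose_mul_self (X1 ω)
  have hthreshold : M1 * (n * kappa * sigma ^ 2) = (√n * (betamin / 3)) ^ 2 := by
    rw [mul_pow, Real.sq_sqrt (Nat.cast_nonneg n), hkappa]
    field_simp
    norm_num
  rw [hAn]
  refine (measure_compl_setOf_forall_le ℙ (U := B ∪ E2 ∪ E3) fun ω hω j => ?_).trans ?_
  · simp only [B, E2, E3, Set.mem_union, Set.mem_ofPred_eq, not_or, not_le, not_lt] at hω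
    obtain ⟨⟨hε, hH⟩, hNM⟩ := hω
    refine (hN ω).abs_mulVec_apply_lt_of_lamMax_le hSig11pd (hβ j) hbm hlam.le heta.le hM2 hNM
      hlamn hetan ?_
    have hW : (CC11 ω)⁻¹ *ᵥ W1 ω = HA ω *ᵥ eps ω := by
      rw [hW1, hHA, mulVec_smul, smul_mulVec, ← mulVec_mulVec]
    rw [hW, ← Real.sqrt_sq (by positivity : 0 ≤ √n * (betamin / 3)), ← hthreshold]
    exact abs_mulVec_apply_lt_sqrt (HA ω) hM1 hH hε j
  calc (Fintype.card (Fin q) : ℝ≥0∞) * ℙ (B ∪ E2 ∪ E3) ≤ q * (ℙ B + ℙ E2 + ℙ E3) := by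
        rw [Fintype.card_fin]
        gcongr
        exact (measure_union_le _ _).trans (add_le_add_left (measure_union_le _ _) _)
    _ ≤ _ := by
        rw [ENNReal.ofReal_mul (Nat.cast_nonneg q), ENNReal.ofReal_natCast, mul_add, mul_add]
        gcongr
        exact le_mul_of_one_le_left' one_le_two

/-- Bound on the probability that condition A fails:
    ℙ(A_nᶜ) ≤ q·exp(−(n/2)(κ − √(2κ−1))) + q·ℙ(λ_max(H_A H_Aᵀ) > M₁)
      + 2q·ℙ(λ_max(𝒞₁₁⁻¹) > M₂). -/
theorem stmt13 (n p q : ℕ) (hn : 1 ≤ n) (hq : 1 ≤ q) (hqp : q ≤ p)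
    (Ω : Type*) [MeasureSpace Ω] [IsProbabilityMeasure (ℙ : Measure Ω)]
    (sigma : ℝ) (hsigma : 0 < sigma)
    (lam eta M1 M2 : ℝ) (hlam : 0 < lam) (heta : 0 < eta) (hM1 : 0 < M1) (hM2 : 0 < M2)
    (Sig : Matrix (Fin p) (Fin p) ℝ) (hSig : Sig.PosDef)
    (Sig11 : Matrix (Fin q) (Fin q) ℝ)
    (hSig11 : Sig11 = Sig.submatrix (Fin.castLE hqp) (Fin.castLE hqp))
    -- X is a random (measurable) n×p matrix
    (X : Ω → Matrix (Fin n) (Fin p) ℝ) (hX_meas : Measurable fun ω => fun i j => X ω i j)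
    -- ε has i.i.d. centered Gaussian coordinates with variance σ²
    (eps : Ω → Fin n → ℝ) (heps_meas : Measurable eps)
    (heps_indep : iIndepFun (fun i ω => eps ω i) ℙ)
    (heps_gauss : ∀ i : Fin n,
      Measure.map (fun ω => eps ω i) ℙ = gaussianReal 0 ⟨sigma ^ 2, sq_nonneg sigma⟩)
    -- the linear model y = Xβ* + ε
    (betastar : Fin p → ℝ)
    (hbeta1 : ∀ j : Fin p, (j : ℕ) < q → betastar j ≠ 0)
    (hbeta2 : ∀ j : Fin p, q ≤ (j : ℕ) → betastar j = 0)
    (y : Ω → Fin n → ℝ) (hy : ∀ ω, y ω = (X ω).mulVec betastar + eps ω)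
    (beta1 : Fin q → ℝ) (hbeta1q : beta1 = fun j => betastar (Fin.castLE hqp j))
    (betamin : ℝ) (hbetamin : IsLeast {x : ℝ | ∃ j : Fin q, x = |beta1 j|} betamin)
    -- blocks and derived quantities
    (X1 : Ω → Matrix (Fin n) (Fin q) ℝ)
    (hX1 : ∀ ω, X1 ω = (X ω).submatrix id (Fin.castLE hqp))
    (C11 : Ω → Matrix (Fin q) (Fin q) ℝ)
    (hC11 : ∀ ω, C11 ω = ((n : ℝ)⁻¹) • ((X1 ω)ᵀ * X1 ω))
    (W1 : Ω → Fin q → ℝ) (hW1 : ∀ ω, W1 ω = ((Real.sqrt n)⁻¹) • (X1 ω)ᵀ.mulVec (eps ω))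
    (CC11 : Ω → Matrix (Fin q) (Fin q) ℝ)
    (hCC11 : ∀ ω, CC11 ω = C11 ω + (eta / n) • Sig11)
    (HA : Ω → Matrix (Fin q) (Fin n) ℝ)
    (hHA : ∀ ω, HA ω = ((Real.sqrt n)⁻¹) • ((CC11 ω)⁻¹ * (X1 ω)ᵀ))
    -- the event A_n
    (An : Set Ω)
    (hAn : An = {ω | ∀ j : Fin q,
      |(CC11 ω)⁻¹.mulVec (W1 ω) j| < Real.sqrt n *
        (|beta1 j| - (lam / (2 * n)) * |((CC11 ω)⁻¹.mulVec fun k => sgn (beta1 k)) j|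
          - (eta / n) * |(CC11 ω)⁻¹.mulVec (Sig11.mulVec beta1) j|)})
    -- assumptions on the constants
    (hM1lt : M1 < betamin ^ 2 / (9 * sigma ^ 2))
    (hlamn : lam / n < 2 * betamin / (3 * M2 * Real.sqrt q))
    (hetan : eta / n < (1 / (3 * M2 * lamMax Sig11)) * (betamin / norm2 beta1))
    (kappa : ℝ) (hkappa : kappa = betamin ^ 2 / (9 * M1 * sigma ^ 2)) :
    ℙ Anᶜ
      ≤ ENNReal.ofReal
          ((q : ℝ) * Real.exp (-(n / 2 : ℝ) * (kappa - Real.sqrt (2 * kappa - 1))))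
        + (q : ℝ≥0∞) * ℙ {ω | M1 < lamMax (HA ω * (HA ω)ᵀ)}
        + (2 * q : ℝ≥0∞) * ℙ {ω | M2 < lamMax ((CC11 ω)⁻¹)} :=
  stmt13_general n p q hqp Ω sigma hsigma lam eta M1 M2 hlam heta hM1 hM2 Sig hSig Sig11 hSig11 eps
    heps_meas heps_indep heps_gauss betastar hbeta1 beta1 hbeta1q betamin hbetamin X1 C11 hC11 W1
    hW1 CC11 hCC11 HA hHA An hAn hM1lt hlamn hetan kappa hkappa
end

section
/- Let M₃ > 0 and α > 0 be constants with λ/n ≥ 2·√(2+√2)·√M₃·σ/α. Then the probability that condition B fails satisfies: ℙ(B_nᶜ) ≤ (p−q)·exp(−n/2) + (p−q)·ℙ(λ_max(H_B H_Bᵀ) > M₃) + (p−q)·ℙ(G_nᶜ), where G_n is the GIC event that max_{1≤j≤p−q} |(𝒞₂₁𝒞₁₁^{-1}(sign(β₁*) + (2η/λ)Σ₁₁β₁*) − (2η/λ)Σ₂₁β₁*)_j| ≤ 1 − α. -/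
/-!
On the complement of the three bad events the condition holds coordinatewise. The left-hand
side of condition B is the `j`-th coordinate of `H_B ε`, which by Cauchy–Schwarz is at most the
norm of the `j`-th row of `H_B` times `‖ε‖`. That row norm squared is a diagonal entry of
`H_B H_Bᵀ`, hence at most `λ_max(H_B H_Bᵀ) ≤ M₃`, and a Chernoff bound with `t = 1/(4σ²)`, for
which `𝔼 exp(t ε_i²) = √2`, gives `‖ε‖² < (2 + √2) n σ²` outside probability `exp(-n/2)`. The
assumption on `λ / n` turns the product of the two bounds into `(λ / (2√n)) α`, and on `G_n`
this is at most the right-hand side of condition B.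
-/

open Matrix MeasureTheory ProbabilityTheory
open scoped ENNReal NNReal

open Real

lemma Matrix.IsHermitian.apply_self_le_of_eigenvalues_le {n : Type*} [Fintype n]
    [DecidableEq n] {A : Matrix n n ℝ} (hA : A.IsHermitian) {c : ℝ}
    (hc : ∀ i, hA.eigenvalues i ≤ c) (j : n) : A j j ≤ c := by
  have hunit : ∑ i, hA.eigenvectorBasis i j ^ 2 = 1 := by
    simpa [Matrix.mul_apply, sq] using
      congrFun (congrFun (Unitary.coe_mul_star_self hA.eigenvectorUnitary) j) j
  calc A j j = ∑ i, hA.eigenvalues i * hA.eigenvectorBasis i j ^ 2 := by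
        conv_lhs => rw [hA.spectral_theorem]
        rw [Unitary.conjStarAlgAut_apply, mul_apply]
        simp only [mul_diagonal, Function.comp_apply, RCLike.ofReal_real_eq_id, id, star_apply,
          star_trivial, eigenvectorUnitary_apply]
        exact Finset.sum_congr rfl fun i _ => by ring
    _ ≤ ∑ i, c * hA.eigenvectorBasis i j ^ 2 := by gcongr with i; exact hc i
    _ = c := by rw [← Finset.mul_sum, hunit, mul_one]

section LamMax

variable {m : ℕ}

lemma bddAbove_setOf_mulVec_eq_smul (M : Matrix (Fin m) (Fin m) ℝ) :
    BddAbove {μ : ℝ | ∃ v : Fin m → ℝ, v ≠ 0 ∧ M *ᵥ v = μ • v} := by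
  refine (Module.End.finite_hasEigenvalue (Matrix.toLin' M)).subset ?_ |>.bddAbove
  rintro μ ⟨v, hv, hMv⟩
  exact Module.End.hasEigenvalue_of_hasEigenvector ⟨Module.End.mem_eigenspace_iff.mpr hMv, hv⟩

lemma Matrix.IsHermitian.eigenvalues_le_lamMax_s14 {M : Matrix (Fin m) (Fin m) ℝ}
    (hM : M.IsHermitian) (i : Fin m) : hM.eigenvalues i ≤ lamMax M :=
  le_csSup (bddAbove_setOf_mulVec_eq_smul M)
    ⟨hM.eigenvectorBasis i, fun h => hM.eigenvectorBasis.orthonormal.ne_zero i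
      (WithLp.ofLp_injective 2 h), hM.mulVec_eigenvectorBasis i⟩

lemma sum_sq_apply_le_lamMax_mul_transpose {ι : Type*} [Fintype ι]
    (H : Matrix (Fin m) ι ℝ) (j : Fin m) : ∑ k, H j k ^ 2 ≤ lamMax (H * Hᵀ) := by
  have hsymm : (H * Hᵀ).IsHermitian := by
    simpa using isHermitian_mul_conjTranspose_self H
  calc ∑ k, H j k ^ 2 = (H * Hᵀ) j j := by simp [mul_apply, sq]
    _ ≤ lamMax (H * Hᵀ) := hsymm.apply_self_le_of_eigenvalues_le hsymm.eigenvalues_le_lamMax_s14 j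

lemma abs_mulVec_apply_le_sqrt_lamMax_mul {ι : Type*} [Fintype ι]
    (H : Matrix (Fin m) ι ℝ) (v : ι → ℝ) (j : Fin m) :
    |(H *ᵥ v) j| ≤ √(lamMax (H * Hᵀ)) * √(∑ k, v k ^ 2) := by
  calc |(H *ᵥ v) j| = |∑ k, H j k * v k| := rfl
    _ ≤ √(∑ k, H j k ^ 2) * √(∑ k, v k ^ 2) := by
        rw [← sqrt_mul (Finset.sum_nonneg fun k _ => sq_nonneg _)]
        exact abs_le_sqrt (Finset.sum_mul_sq_le_sq_mul_sq _ _ _)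
    _ ≤ √(lamMax (H * Hᵀ)) * √(∑ k, v k ^ 2) := by
        gcongr; exact sum_sq_apply_le_lamMax_mul_transpose H j

end LamMax

lemma gaussianPDFReal_zero_mul_exp_mul_sq (v : ℝ≥0) (t x : ℝ) :
    gaussianPDFReal 0 v x * exp (t * x ^ 2)
      = (√(2 * π * v))⁻¹ * exp (-((2 * (v : ℝ))⁻¹ - t) * x ^ 2) := by
  rw [gaussianPDFReal, mul_assoc, ← exp_add]
  congr 2
  ring

lemma integrable_exp_mul_sq_gaussianReal {v : ℝ≥0} (hv : v ≠ 0) {t : ℝ} (ht : 2 * t * v < 1) :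
    Integrable (fun x => exp (t * x ^ 2)) (gaussianReal 0 v) := by
  have hv0 : 0 < (v : ℝ) := by positivity
  have hb : 0 < (2 * (v : ℝ))⁻¹ - t := by
    rw [show (2 * (v : ℝ))⁻¹ - t = (1 - 2 * t * v) / (2 * v) by field_simp]
    exact div_pos (by linarith) (by positivity)
  rw [gaussianReal_of_var_ne_zero _ hv, integrable_withDensity_iff_integrable_smul'
    (measurable_gaussianPDF 0 v) (ae_of_all _ fun _ => gaussianPDF_lt_top)]
  simp only [toReal_gaussianPDF, smul_eq_mul, gaussianPDFReal_zero_mul_exp_mul_sq]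
  exact (integrable_exp_neg_mul_sq hb).const_mul _

lemma integral_exp_mul_sq_gaussianReal {v : ℝ≥0} (hv : v ≠ 0) (t : ℝ) :
    ∫ x, exp (t * x ^ 2) ∂gaussianReal 0 v = (√(1 - 2 * t * v))⁻¹ := by
  have hv0 : 0 < (v : ℝ) := by positivity
  rw [integral_gaussianReal_eq_integral_smul hv]
  simp only [smul_eq_mul, gaussianPDFReal_zero_mul_exp_mul_sq]
  rw [integral_const_mul, integral_gaussian,
    show (2 * (v : ℝ))⁻¹ - t = (1 - 2 * t * v) / (2 * v) by field_simp, ← sqrt_inv,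
    ← sqrt_mul (by positivity), ← sqrt_inv]
  congr 1
  field_simp

lemma sqrt_two_le_exp_sqrt_two_div_four : √2 ≤ exp (√2 / 4) := by
  have hlog : log 2 < 0.6931471808 := log_two_lt_d9
  have hsqrt : (1.4 : ℝ) < √2 := by
    rw [lt_sqrt (by norm_num)]; norm_num
  calc √2 = exp (log 2 / 2) := by rw [← log_sqrt (by norm_num), exp_log (by positivity)]
    _ ≤ exp (√2 / 4) := by rw [exp_le_exp]; linarith

section GaussianTail

variable {Ω : Type*} [MeasurableSpace Ω] {μ : Measure Ω}

lemma integrable_exp_mul_sq_of_map_eq_gaussianReal {Y : Ω → ℝ} (hY : Measurable Y) {v : ℝ≥0}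
    (hv : v ≠ 0) (hYv : μ.map Y = gaussianReal 0 v) {t : ℝ} (ht : 2 * t * v < 1) :
    Integrable (fun ω => exp (t * Y ω ^ 2)) μ := by
  have h := integrable_exp_mul_sq_gaussianReal hv ht
  rw [← hYv] at h
  exact (integrable_map_measure (by fun_prop) hY.aemeasurable).mp h

lemma mgf_sq_of_map_eq_gaussianReal {Y : Ω → ℝ} (hY : Measurable Y) {v : ℝ≥0}
    (hv : v ≠ 0) (hYv : μ.map Y = gaussianReal 0 v) (t : ℝ) :
    mgf (fun ω => Y ω ^ 2) μ t = (√(1 - 2 * t * v))⁻¹ := by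
  rw [mgf, ← integral_exp_mul_sq_gaussianReal hv, ← hYv,
    integral_map hY.aemeasurable (by fun_prop)]

lemma measure_sum_sq_ge_le_of_map_eq_gaussianReal [IsProbabilityMeasure μ] {n : ℕ} {v : ℝ≥0}
    (hv : v ≠ 0) {ε : Ω → Fin n → ℝ} (hε : Measurable ε) (hind : iIndepFun (fun i ω => ε ω i) μ)
    (hgauss : ∀ i, μ.map (fun ω => ε ω i) = gaussianReal 0 v) :
    μ {ω | (2 + √2) * n * v ≤ ∑ i, ε ω i ^ 2} ≤ ENNReal.ofReal (exp (-n / 2)) := by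
  have hv0 : 0 < (v : ℝ) := by positivity
  set t : ℝ := (4 * v)⁻¹
  have ht : 2 * t * v = 2⁻¹ := by simp only [t]; field_simp; norm_num
  set X : Fin n → Ω → ℝ := fun i ω => ε ω i ^ 2
  have hεi : ∀ i, Measurable fun ω => ε ω i := fun i => (measurable_pi_apply i).comp hε
  have hXmeas : ∀ i, Measurable (X i) := fun i => (hεi i).pow_const 2
  have hXind : iIndepFun X μ := hind.comp (fun _ x => x ^ 2) (fun _ => by fun_prop)
  have hmgf : mgf (∑ i, X i) μ t = √2 ^ n := by
    rw [hXind.mgf_sum hXmeas, Finset.prod_eq_pow_card fun i _ =>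
      mgf_sq_of_map_eq_gaussianReal (hεi i) hv (hgauss i) t, ht,
      show (1 : ℝ) - 2⁻¹ = 2⁻¹ by norm_num, sqrt_inv, inv_inv, Finset.card_univ, Fintype.card_fin]
  have hchernoff := measure_ge_le_exp_mul_mgf (μ := μ) (X := ∑ i, X i) (t := t)
    ((2 + √2) * n * v) (by positivity) (hXind.integrable_exp_mul_sum hXmeas fun i _ =>
      integrable_exp_mul_sq_of_map_eq_gaussianReal (hεi i) hv (hgauss i) (by linarith))
  rw [hmgf] at hchernoff
  have hX : {ω | (2 + √2) * n * v ≤ ∑ i, ε ω i ^ 2} = {ω | (2 + √2) * n * v ≤ (∑ i, X i) ω} := by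
    simp only [X, Finset.sum_apply]
  rw [hX, ← ofReal_measureReal]
  refine ENNReal.ofReal_le_ofReal (hchernoff.trans ?_)
  calc exp (-t * ((2 + √2) * n * v)) * √2 ^ n
      ≤ exp (-t * ((2 + √2) * n * v)) * exp (√2 / 4) ^ n := by
        gcongr; exact sqrt_two_le_exp_sqrt_two_div_four
    _ = exp (-n / 2) := by
        rw [← exp_nat_mul, ← exp_add]
        congr 1
        simp only [t]
        field_simp
        ring

end GaussianTail

lemma abs_mulVec_apply_le_margin {m n : ℕ} (hn : 1 ≤ n) {σ lam M α : ℝ} (hσ : 0 ≤ σ)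
    (hlam : 0 < lam) (hα : 0 < α) (hlamn : lam / n ≥ 2 * √(2 + √2) * √M * σ / α)
    {H : Matrix (Fin m) (Fin n) ℝ} (hH : lamMax (H * Hᵀ) ≤ M)
    {e : Fin n → ℝ} (he : ∑ i, e i ^ 2 ≤ (2 + √2) * n * σ ^ 2)
    {g : ℝ} (hg : |g| ≤ 1 - α) (j : Fin m) :
    |(H *ᵥ e) j| ≤ lam / (2 * √n) - lam / (2 * √n) * |g| := by
  have hn0 : (0 : ℝ) < n := by exact_mod_cast hn
  rw [ge_iff_le, div_le_div_iff₀ hα hn0] at hlamn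
  have hnoise : √M * √((2 + √2) * n * σ ^ 2) * (2 * √n) ≤ lam * α := calc
    _ = 2 * √(2 + √2) * √M * σ * (√n * √n) := by
        rw [sqrt_mul (by positivity), sqrt_mul (by positivity), sqrt_sq hσ]; ring
    _ = 2 * √(2 + √2) * √M * σ * n := by rw [mul_self_sqrt hn0.le]
    _ ≤ lam * α := hlamn
  have hmargin := mul_le_mul_of_nonneg_left hg (by positivity : 0 ≤ lam / (2 * √n))
  calc |(H *ᵥ e) j| ≤ √(lamMax (H * Hᵀ)) * √(∑ i, e i ^ 2) :=
        abs_mulVec_apply_le_sqrt_lamMax_mul H e j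
    _ ≤ √M * √((2 + √2) * n * σ ^ 2) := by gcongr
    _ ≤ lam / (2 * √n) * α := by
        rw [div_mul_eq_mul_div, le_div_iff₀ (by positivity)]; exact hnoise
    _ ≤ lam / (2 * √n) - lam / (2 * √n) * |g| := by linarith

/-- Bound on the probability that condition B fails:
    ℙ(B_nᶜ) ≤ (p−q)·exp(−n/2) + (p−q)·ℙ(λ_max(H_B H_Bᵀ) > M₃) + (p−q)·ℙ(G_nᶜ),
    where G_n is the GIC event. -/
theorem stmt14 (n p q : ℕ) (hn : 1 ≤ n) (hqp : q < p)
    (Ω : Type*) [MeasureSpace Ω] [IsProbabilityMeasure (ℙ : Measure Ω)]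
    (sigma : ℝ) (hsigma : 0 < sigma)
    (lam eta M3 alpha : ℝ) (hlam : 0 < lam)
    (halpha : 0 < alpha)
    (Sig11 : Matrix (Fin q) (Fin q) ℝ)
    (Sig21 : Matrix (Fin (p - q)) (Fin q) ℝ)
    -- ε has i.i.d. centered Gaussian coordinates with variance σ²
    (eps : Ω → Fin n → ℝ) (heps_meas : Measurable eps)
    (heps_indep : iIndepFun (fun i ω => eps ω i) ℙ)
    (heps_gauss : ∀ i : Fin n,
      Measure.map (fun ω => eps ω i) ℙ = gaussianReal 0 ⟨sigma ^ 2, sq_nonneg sigma⟩)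
    (beta1 : Fin q → ℝ)
    -- blocks and derived quantities
    (X1 : Ω → Matrix (Fin n) (Fin q) ℝ)
    (X2 : Ω → Matrix (Fin n) (Fin (p - q)) ℝ)
    (W1 : Ω → Fin q → ℝ) (hW1 : ∀ ω, W1 ω = ((Real.sqrt n)⁻¹) • (X1 ω)ᵀ.mulVec (eps ω))
    (W2 : Ω → Fin (p - q) → ℝ)
    (hW2 : ∀ ω, W2 ω = ((Real.sqrt n)⁻¹) • (X2 ω)ᵀ.mulVec (eps ω))
    (CC11 : Ω → Matrix (Fin q) (Fin q) ℝ)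
    (CC21 : Ω → Matrix (Fin (p - q)) (Fin q) ℝ)
    (HB : Ω → Matrix (Fin (p - q)) (Fin n) ℝ)
    (hHB : ∀ ω, HB ω = ((Real.sqrt n)⁻¹) • (CC21 ω * (CC11 ω)⁻¹ * (X1 ω)ᵀ - (X2 ω)ᵀ))
    -- the event B_n
    (Bn : Set Ω)
    (hBn : Bn = {ω | ∀ j : Fin (p - q),
      |(CC21 ω * (CC11 ω)⁻¹).mulVec (W1 ω) j - W2 ω j| ≤ lam / (2 * Real.sqrt n)
        - (lam / (2 * Real.sqrt n)) *
          |((CC21 ω * (CC11 ω)⁻¹).mulVec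
              ((fun k => sgn (beta1 k)) + (2 * eta / lam) • Sig11.mulVec beta1)
            - (2 * eta / lam) • Sig21.mulVec beta1) j|})
    -- the GIC event G_n
    (Gn : Set Ω)
    (hGn : Gn = {ω | ∀ j : Fin (p - q),
      |((CC21 ω * (CC11 ω)⁻¹).mulVec
          ((fun k => sgn (beta1 k)) + (2 * eta / lam) • Sig11.mulVec beta1)
        - (2 * eta / lam) • Sig21.mulVec beta1) j| ≤ 1 - alpha})
    -- assumption on the constants
    (hlamn : lam / n ≥ 2 * Real.sqrt (2 + Real.sqrt 2) * Real.sqrt M3 * sigma / alpha) :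
    ℙ Bnᶜ
      ≤ ENNReal.ofReal (((p : ℝ) - q) * Real.exp (-(n : ℝ) / 2))
        + ((p - q : ℕ) : ℝ≥0∞) * ℙ {ω | M3 < lamMax (HB ω * (HB ω)ᵀ)}
        + ((p - q : ℕ) : ℝ≥0∞) * ℙ Gnᶜ := by
  set A := {ω | (2 + √2) * n * sigma ^ 2 ≤ ∑ i, eps ω i ^ 2}
  set L := {ω | M3 < lamMax (HB ω * (HB ω)ᵀ)}
  have hB_lhs : ∀ ω, (CC21 ω * (CC11 ω)⁻¹) *ᵥ W1 ω - W2 ω = HB ω *ᵥ eps ω := fun ω => by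
    rw [hW1, hW2, hHB, mulVec_smul, mulVec_mulVec, smul_mulVec, sub_mulVec, smul_sub]
  have hincl : Bnᶜ ⊆ A ∪ L ∪ Gnᶜ := by
    intro ω hω
    by_contra hgood
    simp only [Set.mem_union, Set.mem_compl_iff, not_or, not_not, Set.mem_ofPred_eq, not_le,
      not_lt, A, L, hGn] at hgood
    obtain ⟨⟨hnoise, hlamMax⟩, hgic⟩ := hgood
    refine hω (hBn ▸ fun j => ?_)
    simpa only [← hB_lhs, Pi.sub_apply] using abs_mulVec_apply_le_margin hn hsigma.le hlam
      halpha hlamn hlamMax hnoise.le (hgic j) j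
  have hpq : (1 : ℝ≥0∞) ≤ ((p - q : ℕ) : ℝ≥0∞) := by exact_mod_cast Nat.sub_pos_of_lt hqp
  have hA : ℙ A ≤ ENNReal.ofReal (((p : ℝ) - q) * exp (-(n : ℝ) / 2)) := by
    have hvar : (⟨sigma ^ 2, sq_nonneg sigma⟩ : ℝ≥0) ≠ 0 := by simp [hsigma.ne']
    refine (measure_sum_sq_ge_le_of_map_eq_gaussianReal hvar heps_meas
      heps_indep heps_gauss).trans (ENNReal.ofReal_le_ofReal ?_)
    refine le_mul_of_one_le_left (exp_pos _).le ?_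
    have : (q : ℝ) + 1 ≤ p := by exact_mod_cast hqp
    linarith
  calc ℙ Bnᶜ ≤ ℙ A + ℙ L + ℙ Gnᶜ :=
        (measure_mono hincl).trans <| (measure_union_le _ _).trans <|
          add_le_add_left (measure_union_le _ _) _
    _ ≤ _ := by
        gcongr
        exacts [le_mul_of_one_le_left zero_le hpq, le_mul_of_one_le_left zero_le hpq]
end
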